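/- A vector x ∈ S^7 forms exactly five distinct dot products with the points of the 2_41 polytope ω̄_2160 if and only if x belongs to the normalized E8 root system ω̄_240; moreover, for each x ∈ ω̄_240 the set of these dot products is D(x, ω̄_2160) = {0, 1/(2√2), -1/(2√2), 1/√2, -1/√2}. -/

import Mathlib

open MeasureTheory Metric
open scoped RealInnerProductSpace

noncomputable section

/-- `E n` is the Euclidean space `ℝ^n`; the unit sphere `S^{n-1}` is `Metric.sphere (0 : E n) 1`. -/
abbrev E (n : ℕ) : Type := EuclideanSpace ℝ (Fin n)

/-- Type I vectors of the `2_41` polytope: `4` zero coordinates and `4` coordinates `±1/2`. -/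
noncomputable def typeI : Finset (E 8) :=
  letI : DecidableEq (E 8) := Classical.decEq _
  ((Finset.univ : Finset (Finset (Fin 8) × (Fin 8 → Bool))).filter fun p => p.1.card = 4).image
    (fun p => (WithLp.toLp 2 fun i => if i ∈ p.1 then (if p.2 i then -(1/2 : ℝ) else 1/2) else 0 : E 8))

/-- Type II vectors of the `2_41` polytope: `7` zero coordinates and one coordinate `±1`. -/
noncomputable def typeII : Finset (E 8) :=
  letI : DecidableEq (E 8) := Classical.decEq _
  (Finset.univ : Finset (Fin 8 × Bool)).image
    (fun p => (WithLp.toLp 2 fun i => if i = p.1 then (if p.2 then -(1 : ℝ) else 1) else 0 : E 8))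

/-- Type III vectors of the `2_41` polytope: `7` coordinates `±1/4`, one coordinate `±3/4`,
with an odd total number of negative coordinates. -/
noncomputable def typeIII : Finset (E 8) :=
  letI : DecidableEq (E 8) := Classical.decEq _
  ((Finset.univ : Finset (Fin 8 × (Fin 8 → Bool))).filter fun p =>
      ¬ Even (Finset.univ.filter fun i => p.2 i = true).card).image
    (fun p => (WithLp.toLp 2 fun i =>
      (if p.2 i then (-1 : ℝ) else 1) * (if i = p.1 then 3/4 else 1/4) : E 8))

/-- The `2_41` polytope on `S^7`: the `2160` vectors of types I, II and III. -/
noncomputable def poly241 : Finset (E 8) :=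
  letI : DecidableEq (E 8) := Classical.decEq _
  typeI ∪ typeII ∪ typeIII

/-- The normalized minimal vectors of the `E_8` lattice on `S^7`: the `112` vectors with `6`
zero coordinates and two coordinates `±1/√2`, together with the `128` vectors with all eight
coordinates `±1/(2√2)` and an even number of minus signs. -/
noncomputable def e8Roots : Finset (E 8) :=
  letI : DecidableEq (E 8) := Classical.decEq _
  (((Finset.univ : Finset (Finset (Fin 8) × (Fin 8 → Bool))).filter fun p => p.1.card = 2).image
    (fun p => (WithLp.toLp 2 fun i => if i ∈ p.1 then
        (if p.2 i then -(1 / Real.sqrt 2) else 1 / Real.sqrt 2) else 0 : E 8)))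
  ∪ (((Finset.univ : Finset (Fin 8 → Bool)).filter fun ε =>
      Even (Finset.univ.filter fun i => ε i = true).card).image
    (fun ε => (WithLp.toLp 2 fun i =>
      if ε i then -(1 / (2 * Real.sqrt 2)) else 1 / (2 * Real.sqrt 2) : E 8)))

/-!
Since `poly241 = -poly241`, a set `D(x, ω̄_2160)` with five elements is `{0, ±α, ±β}` with
`0 < α < β`. Pairing `x` with the type II vectors, with the type I vectors carrying the signs of
`x`, and with a type III vector whose signs agree with those of `x` shows that every `|x i|` lies
in `{0, α, β}`, that every sum of four `|x i|` lies in `{0, 2α, 2β}`, and, when `x` has a zero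
coordinate or an odd number of negative ones, that `(∑ |x i|) / 4 + |x m| / 2 ∈ {0, α, β}` for all
`m`. With a zero coordinate this leaves exactly two nonzero coordinates, of absolute value
`β = 1/√2`; without one, all `|x i| = α = 1/(2√2)` and the number of negative signs is even.

Conversely, for a root `x` and `y ∈ poly241` the vectors `2√2 x` and `4 y` have integer
coordinates, so `⟪x, y⟫ = w / (8√2)` for an integer `w`, and a size bound together with the
parity of the set of sign mismatches gives `w ∈ {0, ±4, ±8}`. Explicit vectors attain `0`,
`1/(2√2)` and `1/√2`, and `poly241 = -poly241` gives their negatives.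
-/

open Finset

-- Already elaborating `y ∈ typeI` exceeds the default recursion depth.
set_option maxRecDepth 4000

section Signed

variable {ι : Type*}

def signed (ε : ι → Bool) (m : ι → ℝ) : EuclideanSpace ℝ ι :=
  WithLp.toLp 2 fun i => if ε i then -m i else m i

@[simp]
lemma signed_apply (ε : ι → Bool) (m : ι → ℝ) (i : ι) :
    signed ε m i = if ε i then -m i else m i :=
  rfl

lemma inner_signed [Fintype ι] (ε δ : ι → Bool) (m n : ι → ℝ) :
    ⟪signed ε m, signed δ n⟫ = ∑ i, m i * n i - 2 * ∑ i with ε i ≠ δ i, m i * n i := by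
  rw [sum_filter, mul_sum, ← sum_sub_distrib]
  simp only [PiLp.inner_apply, signed_apply, RCLike.inner_apply, conj_trivial]
  refine sum_congr rfl fun i _ => ?_
  cases ε i <;> cases δ i <;> simp <;> ring

lemma inner_signed_self [Fintype ι] (ε : ι → Bool) (m n : ι → ℝ) :
    ⟪signed ε m, signed ε n⟫ = ∑ i, m i * n i := by
  simp [inner_signed]

lemma neg_signed (ε : ι → Bool) (m : ι → ℝ) : -signed ε m = signed (fun i => !ε i) m := by
  ext i
  simp only [PiLp.neg_apply, signed_apply, Bool.not_eq_true']
  cases ε i <;> simp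

lemma signed_congr {ε δ : ι → Bool} {m : ι → ℝ} (h : ∀ i, m i ≠ 0 → ε i = δ i) :
    signed ε m = signed δ m := by
  ext i
  by_cases hi : m i = 0
  · simp [hi]
  · simp [h i hi]

lemma signed_abs (v : EuclideanSpace ℝ ι) :
    signed (fun i => decide (v i < 0)) (fun i => |v i|) = v := by
  ext i
  by_cases hi : v i < 0
  · simp [hi, abs_of_neg hi]
  · simp [hi, abs_of_nonneg (not_lt.1 hi)]

lemma card_filter_ne_add_two_mul [Fintype ι] (ε δ : ι → Bool) :
    #{i | ε i ≠ δ i} + 2 * #{i | ε i = true ∧ δ i = true} =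
      #{i | ε i = true} + #{i | δ i = true} := by
  simp only [card_filter, mul_sum, ← sum_add_distrib]
  refine sum_congr rfl fun i _ => ?_
  cases ε i <;> cases δ i <;> rfl

lemma even_card_filter_ne_iff [Fintype ι] (ε δ : ι → Bool) :
    Even #{i | ε i ≠ δ i} ↔ (Even #{i | ε i = true} ↔ Even #{i | δ i = true}) := by
  rw [← Nat.even_add, ← card_filter_ne_add_two_mul]
  simp [Nat.even_add]

end Signed

lemma mem_typeI {y : E 8} : y ∈ typeI ↔ ∃ (s : Finset (Fin 8)) (ε : Fin 8 → Bool),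
    #s = 4 ∧ signed ε (fun i => if i ∈ s then 1 / 2 else 0) = y := by
  have h : ∀ (s : Finset (Fin 8)) (ε : Fin 8 → Bool),
      signed ε (fun i => if i ∈ s then 1 / 2 else 0) =
        WithLp.toLp 2 fun i => if i ∈ s then (if ε i then -(1 / 2 : ℝ) else 1 / 2) else 0 := by
    intro s ε
    ext i
    simp only [signed_apply]
    split_ifs <;> simp
  simp only [typeI, mem_image, mem_filter, mem_univ, true_and, Prod.exists, ← h]

lemma mem_typeII {y : E 8} : y ∈ typeII ↔
    ∃ (j : Fin 8) (b : Bool), signed (fun _ => b) (fun i => if i = j then 1 else 0) = y := by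
  have h : ∀ (j : Fin 8) (b : Bool), signed (fun _ => b) (fun i => if i = j then 1 else 0) =
      WithLp.toLp 2 fun i => if i = j then (if b then -(1 : ℝ) else 1) else 0 := by
    intro j b
    ext i
    simp only [signed_apply]
    split_ifs <;> simp
  simp only [typeII, mem_image, mem_univ, true_and, Prod.exists, ← h]

lemma mem_typeIII {y : E 8} : y ∈ typeIII ↔ ∃ (j : Fin 8) (ε : Fin 8 → Bool),
    ¬ Even #{i | ε i = true} ∧ signed ε (fun i => if i = j then 3 / 4 else 1 / 4) = y := by
  have h : ∀ (j : Fin 8) (ε : Fin 8 → Bool),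
      signed ε (fun i => if i = j then 3 / 4 else 1 / 4) =
        WithLp.toLp 2 fun i =>
          (if ε i then (-1 : ℝ) else 1) * (if i = j then 3 / 4 else 1 / 4) := by
    intro j ε
    ext i
    simp only [signed_apply]
    split_ifs <;> simp
  simp only [typeIII, mem_image, mem_filter, mem_univ, true_and, Prod.exists, ← h]

lemma mem_poly241 {y : E 8} : y ∈ poly241 ↔ y ∈ typeI ∨ y ∈ typeII ∨ y ∈ typeIII := by
  simp only [poly241, mem_union, or_assoc]

lemma mem_e8Roots {x : E 8} : x ∈ e8Roots ↔
    (∃ (s : Finset (Fin 8)) (ε : Fin 8 → Bool),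
      #s = 2 ∧ signed ε (fun i => if i ∈ s then 1 / √2 else 0) = x) ∨
    ∃ ε : Fin 8 → Bool, Even #{i | ε i = true} ∧ signed ε (fun _ => 1 / (2 * √2)) = x := by
  have h : ∀ (s : Finset (Fin 8)) (ε : Fin 8 → Bool),
      signed ε (fun i => if i ∈ s then 1 / √2 else 0) =
        WithLp.toLp 2 fun i => if i ∈ s then (if ε i then -(1 / √2) else 1 / √2) else 0 := by
    intro s ε
    ext i
    simp only [signed_apply]
    split_ifs <;> simp
  simp only [e8Roots, mem_union, mem_image, mem_filter, mem_univ, true_and, Prod.exists, ← h]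
  rfl

lemma neg_mem_poly241 {y : E 8} (hy : y ∈ poly241) : -y ∈ poly241 := by
  rw [mem_poly241, mem_typeI, mem_typeII, mem_typeIII] at hy ⊢
  rcases hy with ⟨s, ε, hs, rfl⟩ | ⟨j, b, rfl⟩ | ⟨j, ε, hε, rfl⟩ <;> rw [neg_signed]
  · exact Or.inl ⟨s, _, hs, rfl⟩
  · exact Or.inr (Or.inl ⟨j, !b, rfl⟩)
  · refine Or.inr (Or.inr ⟨j, _, ?_, rfl⟩)
    have h := even_card_filter_ne_iff ε fun i => !ε i
    have hall : #{i | ε i ≠ !ε i} = 8 := by simp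
    rw [hall] at h
    exact fun h' => hε (h.1 ⟨4, rfl⟩ |>.2 h')

lemma signed_single_mem_poly241 (ε : Fin 8 → Bool) (j : Fin 8) :
    signed ε (fun i => if i = j then 1 else 0) ∈ poly241 := by
  rw [signed_congr (δ := fun _ => ε j) fun i hi => by simp_all]
  exact mem_poly241.2 <| Or.inr <| Or.inl <| mem_typeII.2 ⟨j, ε j, rfl⟩

lemma signed_half_mem_poly241 (ε : Fin 8 → Bool) {t : Finset (Fin 8)} (ht : #t = 4) :
    signed ε (fun i => if i ∈ t then 1 / 2 else 0) ∈ poly241 :=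
  mem_poly241.2 <| Or.inl <| mem_typeI.2 ⟨t, ε, ht, rfl⟩

/-- The set `D(x, ω)` of the paper. -/
def innerProducts {V : Type*} [Inner ℝ V] (x : V) (ω : Set V) : Set ℝ :=
  (fun y => ⟪x, y⟫) '' ω

lemma neg_mem_innerProducts_poly241 {x : E 8} {t : ℝ} (ht : t ∈ innerProducts x poly241) :
    -t ∈ innerProducts x poly241 := by
  obtain ⟨y, hy, rfl⟩ := ht
  exact ⟨-y, neg_mem_poly241 hy, inner_neg_right x y⟩

lemma exists_nonneg_mem_of_card_eq_five {F : Finset ℝ} (hF : #F = 5) (hneg : ∀ t ∈ F, -t ∈ F) :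
    ∃ α β : ℝ, 0 < α ∧ α < β ∧ ∀ t ∈ F, 0 ≤ t → t ∈ ({0, α, β} : Set ℝ) := by
  set P := F.filter (0 < ·)
  have hN : F.filter (· < 0) = P.image (- ·) := by
    ext t
    simp only [P, mem_filter, mem_image]
    exact ⟨fun ⟨ht, ht0⟩ => ⟨-t, ⟨hneg t ht, by linarith⟩, neg_neg t⟩,
      fun ⟨s, ⟨hs, hs0⟩, hst⟩ => hst ▸ ⟨hneg s hs, by linarith⟩⟩
  have hZ : #(F.filter (· = 0)) ≤ 1 := card_le_one.2 fun a ha b hb => by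
    rw [(mem_filter.1 ha).2, (mem_filter.1 hb).2]
  have hsplit : #P + (#(F.filter (· < 0)) + #(F.filter (· = 0))) = #F := by
    rw [← card_filter_add_card_filter_not (s := F) (fun t => 0 < t),
      ← card_filter_add_card_filter_not (s := F.filter fun t => ¬ 0 < t) (fun t => t < 0),
      filter_filter, filter_filter]
    congr 3 <;> ext t <;> simp only [mem_filter] <;> grind
  rw [hN, card_image_of_injective _ neg_injective] at hsplit
  obtain ⟨α, β, hαβ, hP⟩ := card_eq_two.1 (show #P = 2 by omega)
  have hmem : ∀ t ∈ F, 0 ≤ t → t ∈ ({0, α, β} : Set ℝ) := by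
    intro t ht ht0
    rcases ht0.eq_or_lt with h | h
    · exact Or.inl h.symm
    · have : t ∈ P := mem_filter.2 ⟨ht, h⟩
      rw [hP] at this
      exact Or.inr (by simpa using this)
  have hα : 0 < α := (mem_filter.1 (hP ▸ mem_insert_self α {β})).2
  have hβ : 0 < β := (mem_filter.1 (hP ▸ mem_insert_of_mem (mem_singleton_self β))).2
  rcases hαβ.lt_or_gt with h | h
  · exact ⟨α, β, hα, h, hmem⟩
  · exact ⟨β, α, hβ, h, fun t ht ht0 => by simpa [or_comm] using hmem t ht ht0⟩

lemma sum_eq_card_mul_of_forall_eq {ι : Type*} {u : ι → ℝ} {s : Finset ι} {a : ℝ}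
    (h : ∀ i ∈ s, u i = a) : ∑ i ∈ s, u i = #s * a := by
  rw [sum_eq_card_nsmul h, nsmul_eq_mul]

lemma eq_indicator_of_exists_eq_zero {ι : Type*} [Fintype ι] [DecidableEq ι] {u : ι → ℝ}
    {α β : ℝ} (hα : 0 < α) (hαβ : α < β) (hu : ∀ i, u i ∈ ({0, α, β} : Set ℝ))
    (hz : ∃ z, u z = 0) (hne : ∃ i, u i ≠ 0)
    (hI : ∀ s : Finset ι, #s = 4 → (∑ i ∈ s, u i) / 2 ∈ ({0, α, β} : Set ℝ))
    (hIII : ∀ m, (∑ i, u i) / 4 + u m / 2 ∈ ({0, α, β} : Set ℝ)) :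
    ∃ s : Finset ι, #s = 2 ∧ ∀ i, u i = if i ∈ s then β else 0 := by
  simp only [Set.mem_insert_iff, Set.mem_singleton_iff] at hu hI hIII
  obtain ⟨z, hz⟩ := hz
  obtain ⟨j, hj⟩ := hne
  have hu0 : ∀ i, 0 ≤ u i := fun i => by rcases hu i with h | h | h <;> linarith
  have hpos : 0 < ∑ i, u i := sum_pos' (fun i _ => hu0 i) ⟨j, mem_univ _, (hu0 j).lt_of_ne' hj⟩
  -- `hIII` at `z` and at a nonzero coordinate gives two positive values of `{α, β}`, the second
  -- one larger: so `∑ u / 4 = α` and every nonzero `u i` equals `2 (β - α)`.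
  have hT : (∑ i, u i) / 4 = α := by
    have := hIII z
    have := hIII j
    have := (hu0 j).lt_of_ne' hj
    grind
  have hval : ∀ i, u i ≠ 0 → u i = 2 * (β - α) := fun i hi => by
    have := hIII i
    have := (hu0 i).lt_of_ne' hi
    grind
  set s := univ.filter (u · ≠ 0)
  have hsum : (#s : ℝ) * (2 * (β - α)) = 4 * α := by
    rw [← sum_eq_card_mul_of_forall_eq fun i hi => hval i (mem_filter.1 hi).2, sum_filter_ne_zero]
    linarith
  have hsI : (∑ i ∈ s, u i) / 2 = 2 * α := by
    rw [sum_filter_ne_zero]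
    linarith
  rcases hu j with h | h | h
  · exact absurd h hj
  · -- four coordinates equal `α = 2 (β - α)`, and their sum `4α` is not twice `0`, `α` or `3α/2`
    have hs : #s = 4 := by
      have : (#s : ℝ) = 4 := by nlinarith [hval j hj]
      exact_mod_cast this
    rcases hI s hs with h' | h' | h' <;> rw [hsI] at h' <;> nlinarith [hval j hj]
  · refine ⟨s, ?_, fun i => ?_⟩
    · have : (#s : ℝ) = 2 := by nlinarith [hval j hj]
      exact_mod_cast this
    · by_cases hi : u i = 0
      · simp [s, hi]
      · rw [if_pos (show i ∈ s from mem_filter.2 ⟨mem_univ _, hi⟩)]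
        linarith [hval i hi, hval j hj]

lemma eq_const_of_forall_ne_zero {u : Fin 8 → ℝ} {α β : ℝ} {P : Prop}
    (hα : 0 < α) (hαβ : α < β) (hu : ∀ i, u i ∈ ({α, β} : Set ℝ))
    (hI : ∀ s : Finset (Fin 8), #s = 4 → (∑ i ∈ s, u i) / 2 ∈ ({0, α, β} : Set ℝ))
    (hIII : P → ∀ m, (∑ i, u i) / 4 + u m / 2 ∈ ({0, α, β} : Set ℝ)) :
    (∀ i, u i = α) ∧ ¬ P := by
  simp only [Set.mem_insert_iff, Set.mem_singleton_iff] at hu hI hIII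
  set A := univ.filter (u · = β)
  set B := univ.filter (u · = α)
  have hAB : #A + #B = 8 := by
    have hB : univ.filter (fun i => ¬ u i = β) = B := filter_congr fun i _ => by grind
    rw [← hB, card_filter_add_card_filter_not, card_univ, Fintype.card_fin]
  have hB5 : 5 ≤ #B := by
    by_contra h
    obtain ⟨t, htA, ht⟩ := exists_subset_card_eq (show 4 ≤ #A by omega)
    have hsum := sum_eq_card_mul_of_forall_eq fun i hi => (mem_filter.1 (htA hi)).2
    rcases hI t ht with h' | h' | h' <;> rw [hsum, ht] at h' <;> push_cast at h' <;> linarith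
  have hβ : β = 2 * α := by
    obtain ⟨t, htB, ht⟩ := exists_subset_card_eq (show 4 ≤ #B by omega)
    have hsum := sum_eq_card_mul_of_forall_eq fun i hi => (mem_filter.1 (htB hi)).2
    rcases hI t ht with h' | h' | h' <;> rw [hsum, ht] at h' <;> push_cast at h' <;> linarith
  have hall : ∀ i, u i = α := by
    intro i
    by_contra hi
    obtain ⟨t, htB, ht⟩ := exists_subset_card_eq (show 3 ≤ #B by omega)
    have hit : i ∉ t := fun h => hi (mem_filter.1 (htB h)).2
    have hsum : ∑ k ∈ insert i t, u k = β + 3 * α := by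
      rw [sum_insert hit, sum_eq_card_mul_of_forall_eq fun k hk => (mem_filter.1 (htB hk)).2, ht]
      push_cast
      linarith [(hu i).resolve_left hi]
    rcases hI (insert i t) (by rw [card_insert_of_notMem hit, ht]) with h' | h' | h' <;>
      rw [hsum] at h' <;> linarith
  refine ⟨hall, fun hP => ?_⟩
  have hsum : ∑ i, u i = 8 * α := by simp [hall]
  rcases hIII hP 0 with h' | h' | h' <;> rw [hsum, hall] at h' <;> linarith

lemma exists_odd_signs_eq_on_support {ι : Type*} [Fintype ι] [DecidableEq ι] (ε : ι → Bool)
    {m : ι → ℝ} (h : (∃ z, m z = 0) ∨ ¬ Even #{i | ε i = true}) :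
    ∃ δ : ι → Bool, ¬ Even #{i | δ i = true} ∧ ∀ i, m i ≠ 0 → ε i = δ i := by
  by_cases hε : Even #{i | ε i = true}
  · obtain ⟨z, hz⟩ := h.resolve_right (not_not.2 hε)
    refine ⟨Function.update ε z (!ε z), fun hδ => ?_, fun i hi => ?_⟩
    · have hne : #{i | ε i ≠ Function.update ε z (!ε z) i} = 1 := by
        rw [card_eq_one]
        refine ⟨z, ext fun i => ?_⟩
        by_cases hi : i = z <;> simp [hi, Function.update_of_ne]
      have := even_card_filter_ne_iff ε (Function.update ε z (!ε z))
      rw [hne] at this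
      exact Nat.not_even_one (this.2 (iff_of_true hε hδ))
    · rw [Function.update_of_ne (by rintro rfl; exact hi hz)]
  · exact ⟨ε, hε, fun _ _ => rfl⟩

lemma sum_mul_typeIII {ι : Type*} [Fintype ι] [DecidableEq ι] (u : ι → ℝ) (j : ι) :
    ∑ i, u i * (if i = j then 3 / 4 else 1 / 4) = (∑ i, u i) / 4 + u j / 2 := by
  have h : ∀ i, u i * (if i = j then 3 / 4 else 1 / 4) = u i / 4 + if i = j then u i / 2 else 0 :=
    fun i => by split_ifs <;> ring
  simp only [h, sum_add_distrib, ← sum_div, sum_ite_eq', mem_univ, if_true]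

lemma inner_signed_eq_sum_abs_mul {ι : Type*} [Fintype ι] {v : EuclideanSpace ℝ ι} {δ : ι → Bool}
    (h : ∀ i, |v i| ≠ 0 → decide (v i < 0) = δ i) (n : ι → ℝ) :
    ⟪v, signed δ n⟫ = ∑ i, |v i| * n i := by
  nth_rewrite 1 [← signed_abs v]
  rw [signed_congr h, inner_signed_self]

section NonnegInnerProducts

variable {x : E 8} {V : Set ℝ}

lemma abs_apply_mem (hD : ∀ y ∈ poly241, 0 ≤ ⟪x, y⟫ → ⟪x, y⟫ ∈ V) (j : Fin 8) : |x j| ∈ V := by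
  have hxy := inner_signed_eq_sum_abs_mul (v := x) (fun _ _ => rfl)
    (fun i => if i = j then (1 : ℝ) else 0)
  simp only [mul_ite, mul_one, mul_zero, sum_ite_eq', mem_univ, if_true] at hxy
  exact hxy ▸ hD _ (signed_single_mem_poly241 _ j) (hxy ▸ abs_nonneg _)

lemma sum_abs_div_two_mem (hD : ∀ y ∈ poly241, 0 ≤ ⟪x, y⟫ → ⟪x, y⟫ ∈ V) (s : Finset (Fin 8))
    (hs : #s = 4) : (∑ i ∈ s, |x i|) / 2 ∈ V := by
  have hxy := inner_signed_eq_sum_abs_mul (v := x) (fun _ _ => rfl)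
    (fun i => if i ∈ s then (1 / 2 : ℝ) else 0)
  simp only [mul_ite, mul_zero, sum_ite_mem, univ_inter, ← div_eq_mul_one_div, ← sum_div] at hxy
  exact hxy ▸ hD _ (signed_half_mem_poly241 _ hs) (hxy ▸ by positivity)

lemma sum_abs_div_four_add_mem (hD : ∀ y ∈ poly241, 0 ≤ ⟪x, y⟫ → ⟪x, y⟫ ∈ V)
    (hP : (∃ z, x z = 0) ∨ ¬ Even #{i | decide (x i < 0) = true}) (j : Fin 8) :
    (∑ i, |x i|) / 4 + |x j| / 2 ∈ V := by
  obtain ⟨δ, hδ, hagree⟩ := exists_odd_signs_eq_on_support (fun i => decide (x i < 0))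
    (m := fun i => |x i|) (by simpa using hP)
  have hy := mem_poly241.2 <| Or.inr <| Or.inr <| mem_typeIII.2 ⟨j, δ, hδ, rfl⟩
  have hxy := inner_signed_eq_sum_abs_mul hagree (fun i => if i = j then 3 / 4 else 1 / 4)
  rw [sum_mul_typeIII] at hxy
  exact hxy ▸ hD _ hy (hxy ▸ by positivity)

end NonnegInnerProducts

lemma exists_nonneg_inner_mem_of_ncard_eq_five {x : E 8}
    (h5 : (innerProducts x poly241).ncard = 5) : ∃ α β : ℝ, 0 < α ∧ α < β ∧
      ∀ y ∈ poly241, 0 ≤ ⟪x, y⟫ → ⟪x, y⟫ ∈ ({0, α, β} : Set ℝ) := by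
  classical
  have hF : innerProducts x poly241 = ↑(poly241.image fun y => ⟪x, y⟫) := coe_image.symm
  rw [hF, Set.ncard_coe_finset] at h5
  obtain ⟨α, β, hα, hαβ, h⟩ := exists_nonneg_mem_of_card_eq_five h5 fun t ht => by
    rw [← mem_coe, ← hF] at ht ⊢
    exact neg_mem_innerProducts_poly241 ht
  exact ⟨α, β, hα, hαβ, fun y hy => h _ (mem_image_of_mem _ hy)⟩

lemma eq_one_div_of_mul_sq_eq_one {a c : ℝ} (ha : 0 ≤ a) (hc : 0 ≤ c) (h : (a * c) ^ 2 = 1) :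
    a = 1 / c :=
  eq_one_div_of_mul_eq_one_left <| (pow_eq_one_iff_of_nonneg (by positivity) two_ne_zero).1 h

lemma mem_e8Roots_of_abs_eq_indicator {x : E 8} {s : Finset (Fin 8)} (hs : #s = 2)
    (hx : ∀ i, |x i| = if i ∈ s then 1 / √2 else 0) : x ∈ e8Roots :=
  mem_e8Roots.2 <| Or.inl
    ⟨s, _, hs, (congrArg _ (funext fun i => (hx i).symm)).trans (signed_abs x)⟩

lemma mem_e8Roots_of_abs_eq_const {x : E 8} (hx : ∀ i, |x i| = 1 / (2 * √2))
    (hpar : Even #{i | decide (x i < 0) = true}) : x ∈ e8Roots :=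
  mem_e8Roots.2 <| Or.inr ⟨_, hpar, (congrArg _ (funext fun i => (hx i).symm)).trans (signed_abs x)⟩

lemma mem_e8Roots_of_ncard_innerProducts_eq_five {x : E 8} (hx : ‖x‖ = 1)
    (h5 : (innerProducts x poly241).ncard = 5) : x ∈ e8Roots := by
  obtain ⟨α, β, hα, hαβ, hD⟩ := exists_nonneg_inner_mem_of_ncard_eq_five h5
  have hnorm : ∑ i, |x i| ^ 2 = 1 := by
    simp [sq_abs, ← EuclideanSpace.real_norm_sq_eq, hx]
  have hne : ∃ i, |x i| ≠ 0 := by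
    by_contra! h
    simp [h] at hnorm
  by_cases hz : ∃ z, x z = 0
  · obtain ⟨s, hs, hxs⟩ := eq_indicator_of_exists_eq_zero hα hαβ (abs_apply_mem hD)
      (by simpa using hz) hne (sum_abs_div_two_mem hD) (sum_abs_div_four_add_mem hD (Or.inl hz))
    have hβ : β = 1 / √2 := by
      refine eq_one_div_of_mul_sq_eq_one (by linarith) (Real.sqrt_nonneg 2) ?_
      simp only [hxs, ite_pow, ne_eq, OfNat.ofNat_ne_zero, not_false_eq_true, zero_pow,
        sum_ite_mem, univ_inter, sum_const, hs, nsmul_eq_mul] at hnorm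
      rw [mul_pow, Real.sq_sqrt zero_le_two]
      push_cast at hnorm
      linarith
    exact mem_e8Roots_of_abs_eq_indicator hs fun i => by rw [hxs, hβ]
  · simp only [not_exists] at hz
    have hu : ∀ i, |x i| ∈ ({α, β} : Set ℝ) := fun i => by
      simpa [hz i] using abs_apply_mem hD i
    obtain ⟨hxα, hpar⟩ := eq_const_of_forall_ne_zero hα hαβ hu (sum_abs_div_two_mem hD)
      (fun h => sum_abs_div_four_add_mem hD (Or.inr h))
    have hα' : α = 1 / (2 * √2) := by
      refine eq_one_div_of_mul_sq_eq_one hα.le (by positivity) ?_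
      simp only [hxα, sum_const, card_univ, Fintype.card_fin, nsmul_eq_mul] at hnorm
      rw [mul_pow, mul_pow, Real.sq_sqrt zero_le_two]
      push_cast at hnorm
      linarith
    exact mem_e8Roots_of_abs_eq_const (fun i => by rw [hxα, hα']) (not_not.1 hpar)

def fiveValues : Set ℝ := {0, 1 / (2 * √2), -(1 / (2 * √2)), 1 / √2, -(1 / √2)}

/-- The inner product is `(A - 2B) / (8√2)`, where `A = ∑ aᵢbᵢ` and `B` is the part of this sum over
the sign mismatches; either alternative of the hypothesis forces `A - 2B ∈ {0, ±4, ±8}`. -/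
lemma inner_signed_natCast_mem_fiveValues (ε δ : Fin 8 → Bool) (a b : Fin 8 → ℕ)
    (h : (∑ i with ε i ≠ δ i, a i * b i ≤ ∑ i, a i * b i ∧ ∑ i, a i * b i ≤ 8 ∧
        4 ∣ ∑ i, a i * b i ∧ 2 ∣ ∑ i with ε i ≠ δ i, a i * b i) ∨
      (∑ i, a i * b i = 10 ∧ ¬ Even (∑ i with ε i ≠ δ i, a i * b i) ∧
        ∑ i with ε i ≠ δ i, a i * b i ≤ 9)) :
    ⟪signed ε (fun i => a i / (2 * √2)), signed δ (fun i => b i / 4)⟫ ∈ fiveValues := by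
  set A := ∑ i, a i * b i
  set B := ∑ i with ε i ≠ δ i, a i * b i
  have hw : (A : ℤ) - 2 * B = 0 ∨ (A : ℤ) - 2 * B = 4 ∨ (A : ℤ) - 2 * B = -4 ∨
      (A : ℤ) - 2 * B = 8 ∨ (A : ℤ) - 2 * B = -8 := by
    rcases h with ⟨h1, h2, ⟨k, hk⟩, ⟨l, hl⟩⟩ | ⟨h1, h2, h3⟩
    · omega
    · rw [Nat.not_even_iff_odd] at h2
      obtain ⟨l, hl⟩ := h2
      omega
  have hinner : ⟪signed ε (fun i => a i / (2 * √2)), signed δ (fun i => b i / 4)⟫ =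
      (((A : ℤ) - 2 * B : ℤ) : ℝ) / (8 * √2) := by
    rw [inner_signed]
    simp only [A, B]
    push_cast
    have h8 : ∀ i, (a i : ℝ) / (2 * √2) * (b i / 4) = a i * b i / (8 * √2) := fun i => by ring
    simp only [h8, ← sum_div]
    ring
  rw [hinner]
  simp only [fiveValues, Set.mem_insert_iff, Set.mem_singleton_iff]
  rcases hw with h | h | h | h | h <;> rw [h] <;> push_cast
  · exact Or.inl (zero_div _)
  · exact Or.inr <| Or.inl <| by ring
  · exact Or.inr <| Or.inr <| Or.inl <| by ring
  · exact Or.inr <| Or.inr <| Or.inr <| Or.inl <| by ring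
  · exact Or.inr <| Or.inr <| Or.inr <| Or.inr <| by ring

lemma inner_mem_fiveValues_of_card_eq_two {s : Finset (Fin 8)} (hs : #s = 2) (ε δ : Fin 8 → Bool)
    (b : Fin 8 → ℕ) (hb : ∀ i j, i ≠ j → 2 ∣ b i + b j ∧ b i + b j ≤ 4) :
    ⟪signed ε (fun i => if i ∈ s then 1 / √2 else 0), signed δ (fun i => b i / 4)⟫ ∈
      fiveValues := by
  obtain ⟨i, j, hij, rfl⟩ := card_eq_two.1 hs
  have ha : (fun k => if k ∈ ({i, j} : Finset (Fin 8)) then 1 / √2 else 0) =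
      fun k => ((if k ∈ ({i, j} : Finset (Fin 8)) then 2 else 0 : ℕ) : ℝ) / (2 * √2) := by
    funext k
    split_ifs <;> push_cast <;> ring
  have hA : ∑ k, (if k ∈ ({i, j} : Finset (Fin 8)) then 2 else 0) * b k = 2 * (b i + b j) := by
    simp only [ite_mul, zero_mul, sum_ite_mem, univ_inter, sum_pair hij, mul_add]
  rw [ha]
  refine inner_signed_natCast_mem_fiveValues _ _ _ _ <| Or.inl
    ⟨sum_le_sum_of_subset (filter_subset _ _), ?_, ?_, dvd_sum fun k _ => ?_⟩
  · rw [hA]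
    linarith [(hb i j hij).2]
  · rw [hA]
    exact mul_dvd_mul_left 2 (hb i j hij).1
  · split_ifs <;> simp

lemma inner_mem_fiveValues_of_even (ε δ : Fin 8 → Bool) (b : Fin 8 → ℕ) (hb : ∀ i, 2 ∣ b i)
    (hsum : ∑ i, b i = 4 ∨ ∑ i, b i = 8) :
    ⟪signed ε (fun _ => 1 / (2 * √2)), signed δ (fun i => b i / 4)⟫ ∈ fiveValues := by
  convert inner_signed_natCast_mem_fiveValues ε δ (fun _ => 1) b <| Or.inl
    ⟨sum_le_sum_of_subset (filter_subset _ _), ?_, ?_, dvd_sum fun k _ => ?_⟩ using 3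
  · simp
  all_goals simp only [one_mul]
  · omega
  · omega
  · simpa using hb k

lemma inner_mem_fiveValues_of_odd {ε δ : Fin 8 → Bool} (hε : Even #{i | ε i = true})
    (hδ : ¬ Even #{i | δ i = true}) (j : Fin 8) :
    ⟪signed ε (fun _ => 1 / (2 * √2)),
      signed δ (fun i => ((if i = j then 3 else 1 : ℕ) : ℝ) / 4)⟫ ∈ fiveValues := by
  have hM : ¬ Even #{i | ε i ≠ δ i} := by
    rw [even_card_filter_ne_iff]
    tauto
  have hM8 : #{i | ε i ≠ δ i} ≤ 8 := (card_filter_le _ _).trans (by simp)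
  have hb : ∀ i, (if i = j then 3 else 1 : ℕ) = 1 + if i = j then 2 else 0 := fun i => by
    split_ifs <;> rfl
  have hB : ∑ i with ε i ≠ δ i, (if i = j then 3 else 1 : ℕ) =
      #{i | ε i ≠ δ i} + if j ∈ ({i | ε i ≠ δ i} : Finset (Fin 8)) then 2 else 0 := by
    simp only [hb, sum_add_distrib, sum_const, smul_eq_mul, mul_one, sum_ite_eq']
  convert inner_signed_natCast_mem_fiveValues ε δ (fun _ => 1) _ <| Or.inr ⟨?_, ?_, ?_⟩ using 3
  · simp
  · simp [hb, sum_add_distrib]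
  · simp only [one_mul, hB]
    split_ifs <;> simpa [Nat.even_add] using hM
  · simp only [one_mul, hB]
    rw [Nat.not_even_iff_odd] at hM
    obtain ⟨k, hk⟩ := hM
    split_ifs <;> omega

lemma mem_innerProducts_of_card_eq_two {s : Finset (Fin 8)} (hs : #s = 2) (ε : Fin 8 → Bool) :
    let x := signed ε (fun i => if i ∈ s then 1 / √2 else 0)
    0 ∈ innerProducts x poly241 ∧ 1 / (2 * √2) ∈ innerProducts x poly241 ∧
      1 / √2 ∈ innerProducts x poly241 := by
  obtain ⟨i, j, hij, rfl⟩ := card_eq_two.1 hs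
  obtain ⟨k, -, hk⟩ := exists_mem_notMem_of_card_lt_card (s := {i, j}) (t := univ) (by simp [hs])
  obtain ⟨t, hit, htj, ht⟩ := exists_subsuperset_card_eq (s := {i}) (t := univ.erase j) (n := 4)
    (by simpa using hij) (by simp) (by simp)
  refine ⟨⟨_, signed_single_mem_poly241 (fun _ => false) k, ?_⟩,
    ⟨_, signed_half_mem_poly241 ε ht, ?_⟩, ⟨_, signed_single_mem_poly241 ε i, ?_⟩⟩
  · simp only [mem_insert, mem_singleton, not_or] at hk
    simp [inner_signed, hk]
  · show ⟪_, _⟫ = _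
    rw [inner_signed_self]
    have hi : i ∈ t := hit (mem_singleton_self i)
    have hj : j ∉ t := fun h => by simpa using htj h
    have hts : t ∩ {i, j} = {i} := by
      ext k
      simp only [mem_inter, mem_insert, mem_singleton]
      grind
    simp only [ite_mul, zero_mul, mul_ite, mul_zero, sum_ite_mem, univ_inter, hts, sum_singleton]
    ring
  · simp [inner_signed_self]

lemma mem_innerProducts_of_const (ε : Fin 8 → Bool) :
    let x := signed ε (fun _ => 1 / (2 * √2))
    0 ∈ innerProducts x poly241 ∧ 1 / (2 * √2) ∈ innerProducts x poly241 ∧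
      1 / √2 ∈ innerProducts x poly241 := by
  set t : Finset (Fin 8) := {0, 1, 2, 3}
  have ht : #t = 4 := rfl
  set δ : Fin 8 → Bool := fun i => if i ∈ ({0, 1} : Finset (Fin 8)) then !ε i else ε i
  have hM : ({i | ε i ≠ δ i} : Finset (Fin 8)) = {0, 1} := by
    ext i
    simp only [δ, mem_filter, mem_univ, true_and]
    split_ifs with h <;> simp [h]
  refine ⟨⟨_, signed_half_mem_poly241 δ ht, ?_⟩, ⟨_, signed_single_mem_poly241 ε 0, ?_⟩,
    ⟨_, signed_half_mem_poly241 ε ht, ?_⟩⟩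
  · show ⟪_, _⟫ = _
    rw [inner_signed, hM]
    simp [t, Fin.sum_univ_eight]
    ring
  · simp [inner_signed_self]
  · show ⟪_, _⟫ = _
    rw [inner_signed_self]
    simp [t, Fin.sum_univ_eight]
    ring

lemma inner_mem_fiveValues {x y : E 8} (hx : x ∈ e8Roots) (hy : y ∈ poly241) :
    ⟪x, y⟫ ∈ fiveValues := by
  rw [mem_e8Roots] at hx
  rw [mem_poly241, mem_typeI, mem_typeII, mem_typeIII] at hy
  have hI (t : Finset (Fin 8)) : (fun i => if i ∈ t then (1 / 2 : ℝ) else 0) =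
      fun i => ((if i ∈ t then 2 else 0 : ℕ) : ℝ) / 4 := by
    funext i
    split_ifs <;> norm_num
  have hII (j : Fin 8) : (fun i => if i = j then (1 : ℝ) else 0) =
      fun i => ((if i = j then 4 else 0 : ℕ) : ℝ) / 4 := by
    funext i
    split_ifs <;> norm_num
  have hIII (j : Fin 8) : (fun i => if i = j then (3 / 4 : ℝ) else 1 / 4) =
      fun i => ((if i = j then 3 else 1 : ℕ) : ℝ) / 4 := by
    funext i
    split_ifs <;> norm_num
  rcases hx with ⟨s, ε, hs, rfl⟩ | ⟨ε, hε, rfl⟩ <;>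
    rcases hy with ⟨t, δ, ht, rfl⟩ | ⟨j, b, rfl⟩ | ⟨j, δ, hδ, rfl⟩ <;>
    simp only [hI, hII, hIII]
  · exact inner_mem_fiveValues_of_card_eq_two hs _ _ _ fun i k _ => by split_ifs <;> omega
  · exact inner_mem_fiveValues_of_card_eq_two hs _ _ _ fun i k hik => by split_ifs <;> grind
  · exact inner_mem_fiveValues_of_card_eq_two hs _ _ _ fun i k hik => by split_ifs <;> grind
  · refine inner_mem_fiveValues_of_even _ _ _ (fun i => by split_ifs <;> norm_num) (Or.inr ?_)
    simp [sum_ite_mem, ht]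
  · refine inner_mem_fiveValues_of_even _ _ _ (fun i => by split_ifs <;> norm_num) (Or.inl ?_)
    simp
  · exact inner_mem_fiveValues_of_odd hε hδ j

lemma innerProducts_eq_fiveValues {x : E 8} (hx : x ∈ e8Roots) :
    innerProducts x poly241 = fiveValues := by
  refine Set.Subset.antisymm (fun t ⟨y, hy, hyt⟩ => hyt ▸ inner_mem_fiveValues hx hy) ?_
  obtain ⟨h0, hc, h2c⟩ : 0 ∈ innerProducts x poly241 ∧ 1 / (2 * √2) ∈ innerProducts x poly241 ∧
      1 / √2 ∈ innerProducts x poly241 := by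
    rcases mem_e8Roots.1 hx with ⟨s, ε, hs, rfl⟩ | ⟨ε, -, rfl⟩
    exacts [mem_innerProducts_of_card_eq_two hs ε, mem_innerProducts_of_const ε]
  rintro t (rfl | rfl | rfl | rfl | rfl)
  exacts [h0, hc, neg_mem_innerProducts_poly241 hc, h2c, neg_mem_innerProducts_poly241 h2c]

lemma ncard_eq_five_of_pos {a b : ℝ} (ha : 0 < a) (hab : a < b) :
    ({0, a, -a, b, -b} : Set ℝ).ncard = 5 := by
  rw [Set.ncard_insert_of_notMem, Set.ncard_insert_of_notMem, Set.ncard_insert_of_notMem,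
    Set.ncard_pair] <;>
    simp only [Set.mem_insert_iff, Set.mem_singleton_iff, not_or, ne_eq] <;>
    (repeat' constructor) <;> intro h <;> linarith

lemma ncard_fiveValues : fiveValues.ncard = 5 := by
  refine ncard_eq_five_of_pos (by positivity) ?_
  gcongr
  linarith [Real.sqrt_pos.2 two_pos]

/-- Lemma 4.1 (second part): a point of `S^7` forms exactly five distinct dot products with the
`2_41` polytope iff it belongs to the normalized `E_8` root system; for such a point the dot
products are `0, ±1/(2√2), ±1/√2`. -/
theorem poly241_exactly_five_dot_products :
    (∀ x ∈ sphere (0 : E 8) 1,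
      (((fun y => ⟪x, y⟫) '' (↑poly241 : Set (E 8))).ncard = 5 ↔ x ∈ e8Roots)) ∧
    ∀ x ∈ e8Roots, (fun y => ⟪x, y⟫) '' (↑poly241 : Set (E 8)) =
      ({0, 1 / (2 * Real.sqrt 2), -(1 / (2 * Real.sqrt 2)),
        1 / Real.sqrt 2, -(1 / Real.sqrt 2)} : Set ℝ) := by
  refine ⟨fun x hx => ⟨mem_e8Roots_of_ncard_innerProducts_eq_five (by simpa using hx),
    fun h => ?_⟩, fun x hx => innerProducts_eq_fiveValues hx⟩
  change (innerProducts x poly241).ncard = 5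
  rw [innerProducts_eq_fiveValues h, ncard_fiveValues]
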